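/- In the setting of the two-space join Z = X ∪ Y with cross-distance c (2c ≥ max(D(X), D(Y))), if μ₁ ∈ M₁(X) and μ₂ ∈ M₁(Y) are d-invariant measures, then μ = (M(Y) − c)μ₁ + (M(X) − c)μ₂ is a d-invariant measure on Z with value M(X)M(Y) − c². -/

import Mathlib

open MeasureTheory

/-- Integral of a function against a finite signed Borel measure, via Jordan decomposition. -/
noncomputable def sInt {X : Type*} [MeasurableSpace X] (μ : SignedMeasure X) (f : X → ℝ) : ℝ :=
  (∫ x, f x ∂μ.toJordanDecomposition.posPart) - ∫ x, f x ∂μ.toJordanDecomposition.negPart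

/-- Energy `I(μ, ν) = ∫∫ d(x,y) dμ(x) dν(y)` with respect to a kernel `d`. -/
noncomputable def en {X : Type*} [MeasurableSpace X] (d : X → X → ℝ)
    (μ ν : SignedMeasure X) : ℝ :=
  sInt μ (fun x => sInt ν (fun y => d x y))

/-- The potential `d_μ(x) = ∫ d(x,y) dμ(y)`. -/
noncomputable def dPot {X : Type*} [MeasurableSpace X] (d : X → X → ℝ)
    (μ : SignedMeasure X) (x : X) : ℝ :=
  sInt μ (fun y => d x y)

/-- The set of energies `I(μ)` of signed Borel measures of total mass one. -/
noncomputable def MSet (X : Type*) [MetricSpace X] [MeasurableSpace X] : Set ℝ :=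
  {r | ∃ μ : SignedMeasure X, μ Set.univ = (1 : ℝ) ∧ en (fun x y => dist x y) μ μ = r}

/-- The combined distance function on the disjoint union `X ⊕ Y`: it agrees with `d₁`
on `X`, with `d₂` on `Y`, and equals the constant `c` between `X` and `Y`. -/
def dJoin {X Y : Type*} (d₁ : X → X → ℝ) (d₂ : Y → Y → ℝ) (c : ℝ) :
    X ⊕ Y → X ⊕ Y → ℝ
  | .inl x, .inl x' => d₁ x x'
  | .inr y, .inr y' => d₂ y y'
  | _, _ => c

/-! At `x ∈ X` the kernel of the join is `dist x` on `X` and the constant `c` on `Y`, so by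
linearity of the signed integral the potential of `μ` at `x` is
`(M(Y) - c) d_{μ₁}(x) + (M(X) - c) c μ₂(Y) = (M(Y) - c) M(X) + (M(X) - c) c`
`= M(X) M(Y) - c²`, and symmetrically on `Y`. Linearity, and compatibility with push-forwards, come from the fact
that for a bounded measurable integrand `sInt μ` can be computed from any decomposition
`μ = p - n` into finite measures, not only from the Jordan decomposition. -/

section SignedIntegral

variable {Z : Type*} [MeasurableSpace Z] {f : Z → ℝ}

lemma integrable_of_bounded (hf : Measurable f) (hb : ∃ C, ∀ z, ‖f z‖ ≤ C)
    (m : Measure Z) [IsFiniteMeasure m] : Integrable f m :=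
  let ⟨C, hC⟩ := hb
  .of_bound hf.aestronglyMeasurable C (.of_forall hC)

lemma sInt_eq_of_eq_sub (hf : Measurable f) (hb : ∃ C, ∀ z, ‖f z‖ ≤ C)
    {μ : SignedMeasure Z} {p n : Measure Z} [IsFiniteMeasure p] [IsFiniteMeasure n]
    (h : μ = p.toSignedMeasure - n.toSignedMeasure) :
    sInt μ f = (∫ z, f z ∂p) - ∫ z, f z ∂n := by
  set P := μ.toJordanDecomposition.posPart
  set N := μ.toJordanDecomposition.negPart
  have hPN : P.toSignedMeasure - N.toSignedMeasure = p.toSignedMeasure - n.toSignedMeasure :=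
    μ.toSignedMeasure_toJordanDecomposition.trans h
  have hcross : P + n = N + p := by
    rw [← Measure.toSignedMeasure_eq_toSignedMeasure_iff, Measure.toSignedMeasure_add,
      Measure.toSignedMeasure_add, sub_eq_sub_iff_add_eq_add.mp hPN, add_comm]
  have hint := congrArg (fun m => ∫ z, f z ∂m) hcross
  simp only [integral_add_measure (integrable_of_bounded hf hb _)
    (integrable_of_bounded hf hb _)] at hint
  simp only [sInt, P, N] at hint ⊢
  linarith

lemma sInt_add (hf : Measurable f) (hb : ∃ C, ∀ z, ‖f z‖ ≤ C) (μ ν : SignedMeasure Z) :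
    sInt (μ + ν) f = sInt μ f + sInt ν f := by
  have hμ : _ = μ := μ.toSignedMeasure_toJordanDecomposition
  have hν : _ = ν := ν.toSignedMeasure_toJordanDecomposition
  simp only [JordanDecomposition.toSignedMeasure] at hμ hν
  have hsplit : μ + ν = (μ.toJordanDecomposition.posPart + ν.toJordanDecomposition.posPart
      ).toSignedMeasure - (μ.toJordanDecomposition.negPart + ν.toJordanDecomposition.negPart
      ).toSignedMeasure := by
    rw [Measure.toSignedMeasure_add, Measure.toSignedMeasure_add]
    conv_lhs => rw [← hμ, ← hν]
    abel
  rw [sInt_eq_of_eq_sub hf hb hsplit, integral_add_measure (integrable_of_bounded hf hb _)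
    (integrable_of_bounded hf hb _), integral_add_measure (integrable_of_bounded hf hb _)
    (integrable_of_bounded hf hb _), sInt, sInt]
  ring

lemma sInt_smul (r : ℝ) (μ : SignedMeasure Z) : sInt (r • μ) f = r * sInt μ f := by
  simp only [sInt, SignedMeasure.toJordanDecomposition_smul_real]
  rcases le_or_gt 0 r with hr | hr
  · rw [JordanDecomposition.real_smul_posPart_nonneg _ _ hr,
      JordanDecomposition.real_smul_negPart_nonneg _ _ hr, integral_smul_nnreal_measure,
      integral_smul_nnreal_measure]
    simp only [NNReal.smul_def, smul_eq_mul, Real.coe_toNNReal _ hr]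
    ring
  · rw [JordanDecomposition.real_smul_posPart_neg _ _ hr,
      JordanDecomposition.real_smul_negPart_neg _ _ hr, integral_smul_nnreal_measure,
      integral_smul_nnreal_measure]
    simp only [NNReal.smul_def, smul_eq_mul, Real.coe_toNNReal _ (neg_nonneg.mpr hr.le)]
    ring

lemma sInt_const (μ : SignedMeasure Z) (c : ℝ) : sInt μ (fun _ => c) = μ Set.univ * c := by
  rw [sInt, integral_const, integral_const,
    μ.apply_eq_posPart_real_sub_negPart_real MeasurableSet.univ, smul_eq_mul, smul_eq_mul]
  ring

lemma MeasureTheory.SignedMeasure.map_eq_map_posPart_sub_map_negPart {W : Type*}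
    [MeasurableSpace W] (μ : SignedMeasure W) {g : W → Z} (hg : Measurable g) :
    μ.map g = (μ.toJordanDecomposition.posPart.map g).toSignedMeasure
      - (μ.toJordanDecomposition.negPart.map g).toSignedMeasure := by
  ext s hs
  rw [VectorMeasure.map_apply _ hg hs, Measure.toSignedMeasure_sub_apply hs,
    μ.apply_eq_posPart_real_sub_negPart_real (hg hs), map_measureReal_apply hg hs,
    map_measureReal_apply hg hs]

lemma sInt_map (hf : Measurable f) (hb : ∃ C, ∀ z, ‖f z‖ ≤ C) {W : Type*} [MeasurableSpace W]
    (μ : SignedMeasure W) {g : W → Z} (hg : Measurable g) :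
    sInt (μ.map g) f = sInt μ (f ∘ g) := by
  rw [sInt_eq_of_eq_sub hf hb (μ.map_eq_map_posPart_sub_map_negPart hg),
    integral_map hg.aemeasurable hf.aestronglyMeasurable,
    integral_map hg.aemeasurable hf.aestronglyMeasurable, sInt]
  rfl

end SignedIntegral

lemma exists_norm_sumElim_le {X Y : Type*} {f : X → ℝ} {g : Y → ℝ}
    (hf : ∃ C, ∀ x, ‖f x‖ ≤ C) (hg : ∃ C, ∀ y, ‖g y‖ ≤ C) :
    ∃ C, ∀ w, ‖Sum.elim f g w‖ ≤ C := by
  obtain ⟨C, hC⟩ := hf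
  obtain ⟨D, hD⟩ := hg
  exact ⟨max C D, Sum.rec (fun x => le_max_of_le_left (hC x))
    (fun y => le_max_of_le_right (hD y))⟩

lemma norm_dist_le_diam {X : Type*} [MetricSpace X] [CompactSpace X] (x x' : X) :
    ‖dist x x'‖ ≤ Metric.diam (Set.univ : Set X) := by
  rw [Real.norm_of_nonneg dist_nonneg]
  exact Metric.dist_le_diam_of_mem isCompact_univ.isBounded trivial trivial

section Join

variable {X Y : Type*} {d₁ : X → X → ℝ} {d₂ : Y → Y → ℝ} (c : ℝ)

lemma dJoin_inl (x : X) : dJoin d₁ d₂ c (Sum.inl x) = Sum.elim (d₁ x) fun _ => c := by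
  ext (x' | y') <;> rfl

lemma dJoin_inr (y : Y) : dJoin d₁ d₂ c (Sum.inr y) = Sum.elim (fun _ => c) (d₂ y) := by
  ext (x' | y') <;> rfl

variable [MeasurableSpace X] [MeasurableSpace Y]

lemma sInt_smul_map_inl_add_smul_map_inr {f : X ⊕ Y → ℝ} (hf : Measurable f)
    (hb : ∃ C, ∀ w, ‖f w‖ ≤ C) (a b : ℝ) (μ₁ : SignedMeasure X) (μ₂ : SignedMeasure Y) :
    sInt (a • μ₁.map Sum.inl + b • μ₂.map Sum.inr) f
      = a * sInt μ₁ (f ∘ Sum.inl) + b * sInt μ₂ (f ∘ Sum.inr) := by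
  rw [sInt_add hf hb, sInt_smul, sInt_smul, sInt_map hf hb _ measurable_inl,
    sInt_map hf hb _ measurable_inr]

lemma dPot_dJoin_inl (a b : ℝ) (μ₁ : SignedMeasure X) (μ₂ : SignedMeasure Y) {x : X}
    (hm : Measurable (d₁ x)) (hb : ∃ C, ∀ x', ‖d₁ x x'‖ ≤ C) :
    dPot (dJoin d₁ d₂ c) (a • μ₁.map Sum.inl + b • μ₂.map Sum.inr) (Sum.inl x)
      = a * dPot d₁ μ₁ x + b * (μ₂ Set.univ * c) := by
  rw [dPot, dJoin_inl, sInt_smul_map_inl_add_smul_map_inr (hm.sumElim measurable_const)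
    (exists_norm_sumElim_le hb ⟨‖c‖, fun _ => le_rfl⟩), Sum.elim_comp_inl, Sum.elim_comp_inr,
    sInt_const, dPot]

lemma dPot_dJoin_inr (a b : ℝ) (μ₁ : SignedMeasure X) (μ₂ : SignedMeasure Y) {y : Y}
    (hm : Measurable (d₂ y)) (hb : ∃ C, ∀ y', ‖d₂ y y'‖ ≤ C) :
    dPot (dJoin d₁ d₂ c) (a • μ₁.map Sum.inl + b • μ₂.map Sum.inr) (Sum.inr y)
      = a * (μ₁ Set.univ * c) + b * dPot d₂ μ₂ y := by
  rw [dPot, dJoin_inr, sInt_smul_map_inl_add_smul_map_inr (measurable_const.sumElim hm)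
    (exists_norm_sumElim_le ⟨‖c‖, fun _ => le_rfl⟩ hb), Sum.elim_comp_inl, Sum.elim_comp_inr,
    sInt_const, dPot]

end Join

theorem stmt8_general {X Y : Type*} [MetricSpace X] [CompactSpace X] [MeasurableSpace X] [BorelSpace X]
    [MetricSpace Y] [CompactSpace Y] [MeasurableSpace Y] [BorelSpace Y]
    (mX mY : ℝ)
    (c : ℝ)
    (μ₁ : SignedMeasure X) (hμ₁ : μ₁ Set.univ = (1 : ℝ))
    (μ₂ : SignedMeasure Y) (hμ₂ : μ₂ Set.univ = (1 : ℝ))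
    (hinv₁ : ∀ x : X, dPot (fun x y => dist x y) μ₁ x = mX)
    (hinv₂ : ∀ y : Y, dPot (fun x y => dist x y) μ₂ y = mY) :
    ∀ z : X ⊕ Y,
      dPot (dJoin (fun x y => dist x y) (fun x y => dist x y) c)
        ((mY - c) • μ₁.map Sum.inl + (mX - c) • μ₂.map Sum.inr) z
        = mX * mY - c ^ 2 := by
  rintro (x | y)
  · rw [dPot_dJoin_inl c _ _ _ _ (continuous_const.dist continuous_id).measurable
      ⟨_, norm_dist_le_diam x⟩, hinv₁, hμ₂]
    ring
  · rw [dPot_dJoin_inr c _ _ _ _ (continuous_const.dist continuous_id).measurable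
      ⟨_, norm_dist_le_diam y⟩, hinv₂, hμ₁]
    ring

/-- If `μ₁ ∈ M₁(X)` and `μ₂ ∈ M₁(Y)` are `d`-invariant measures (necessarily of values
`M(X)` and `M(Y)` respectively), then `μ = (M(Y) - c)μ₁ + (M(X) - c)μ₂` is a
`d`-invariant measure on the join `Z = X ∪ Y` with value `M(X)M(Y) - c²`. -/
theorem stmt8 {X Y : Type*} [MetricSpace X] [CompactSpace X] [MeasurableSpace X] [BorelSpace X]
    [MetricSpace Y] [CompactSpace Y] [MeasurableSpace Y] [BorelSpace Y]
    (hqX : ∀ μ : SignedMeasure X, μ Set.univ = (0 : ℝ) → en (fun x y => dist x y) μ μ ≤ 0)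
    (hqY : ∀ μ : SignedMeasure Y, μ Set.univ = (0 : ℝ) → en (fun x y => dist x y) μ μ ≤ 0)
    (mX mY : ℝ) (hmX : IsLUB (MSet X) mX) (hmY : IsLUB (MSet Y) mY)
    (c : ℝ)
    (hc : max (Metric.diam (Set.univ : Set X)) (Metric.diam (Set.univ : Set Y)) ≤ 2 * c)
    (μ₁ : SignedMeasure X) (hμ₁ : μ₁ Set.univ = (1 : ℝ))
    (μ₂ : SignedMeasure Y) (hμ₂ : μ₂ Set.univ = (1 : ℝ))
    (hinv₁ : ∀ x : X, dPot (fun x y => dist x y) μ₁ x = mX)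
    (hinv₂ : ∀ y : Y, dPot (fun x y => dist x y) μ₂ y = mY) :
    ∀ z : X ⊕ Y,
      dPot (dJoin (fun x y => dist x y) (fun x y => dist x y) c)
        ((mY - c) • μ₁.map Sum.inl + (mX - c) • μ₂.map Sum.inr) z
        = mX * mY - c ^ 2 :=
  stmt8_general mX mY c μ₁ hμ₁ μ₂ hμ₂ hinv₁ hinv₂
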